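/- arXiv:2003.00726 — 4 statements merged into one kernel-verified Lean document; each statement's English description precedes it below -/
import Mathlib

section
/- For each nonzero n ∈ ℤ^d, the (1+d)×(1+d) complex matrix with blocks [[0, i nᵀ], [i n, α |n|² Id_d]] (with α > 0) is invertible. -/
open Matrix

theorem stokes_mode_invertible (d : ℕ) (α : ℝ) (hα : 0 < α)
    (n : Fin d → ℤ) (hn : n ≠ 0) :
    IsUnit (Matrix.fromBlocks (0 : Matrix (Fin 1) (Fin 1) ℂ)
      (Matrix.of fun _ j => Complex.I * (n j : ℂ))
      (Matrix.of fun i _ => Complex.I * (n i : ℂ))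
      (((α : ℂ) * ∑ j, ((n j : ℂ))^2) • (1 : Matrix (Fin d) (Fin d) ℂ))) := by
  set s : ℂ := ∑ j, ((n j : ℂ))^2 with hs_def
  have hsz : (∑ j, (n j)^2 : ℤ) ≠ 0 := by
    intro h
    apply hn
    funext j
    have := (Finset.sum_eq_zero_iff_of_nonneg (fun i _ => sq_nonneg (n i))).mp h j (Finset.mem_univ j)
    exact pow_eq_zero_iff (by norm_num) |>.mp this
  have hs : s ≠ 0 := by
    have : s = ((∑ j, (n j)^2 : ℤ) : ℂ) := by push_cast [hs_def]; ring_nf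
    rw [this]
    exact_mod_cast hsz
  have hc : (α : ℂ) * s ≠ 0 := mul_ne_zero (by exact_mod_cast hα.ne') hs
  set c : ℂ := (α : ℂ) * s with hc_def
  have hDdet : ((c • (1 : Matrix (Fin d) (Fin d) ℂ)).det) = c ^ d := by
    simp [Matrix.det_smul]
  haveI : Invertible (c • (1 : Matrix (Fin d) (Fin d) ℂ)) :=
    Matrix.invertibleOfIsUnitDet _ (by rw [hDdet]; exact (pow_ne_zero d hc).isUnit)
  rw [Matrix.isUnit_iff_isUnit_det, Matrix.det_fromBlocks₂₂]
  have hinv : (c • (1 : Matrix (Fin d) (Fin d) ℂ))⁻¹ = c⁻¹ • 1 := by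
    apply Matrix.inv_eq_right_inv
    rw [smul_mul_smul_comm, mul_one, mul_inv_cancel₀ hc, one_smul]
  rw [Matrix.invOf_eq_nonsing_inv, hinv]
  have hBC : (Matrix.of fun (_ : Fin 1) j => Complex.I * (n j : ℂ)) * (c⁻¹ • (1: Matrix (Fin d) (Fin d) ℂ)) * (Matrix.of fun i (_ : Fin 1) => Complex.I * (n i : ℂ)) = Matrix.of fun _ _ => -(c⁻¹ * s) := by
    ext i j
    simp [Matrix.mul_apply, hs_def, Finset.mul_sum, Complex.I_mul_I]
    ring_nf
    simp [Complex.I_sq]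
    try ring_nf
  rw [hBC]
  have : (0 - Matrix.of fun (_ : Fin 1) (_ : Fin 1) => -(c⁻¹ * s)) = Matrix.of fun _ _ => c⁻¹ * s := by
    ext i j; simp
  rw [this]
  rw [Matrix.det_fin_one]
  rw [hDdet]
  simp only [Matrix.of_apply]
  exact ((pow_ne_zero d hc).isUnit.mul (mul_ne_zero (inv_ne_zero hc) hs).isUnit)
end

section
/- Let T be a bounded invertible operator on a Hilbert space with symmetric part satisfying -T_s ≥ s·Id, s > 0. Then the operator T₃ = [-T⁻¹]_s^{-1/2} T⁻¹ satisfies T₃* T₃ = -S⁻¹ where S = T_s, and in particular ‖T₃‖ ≤ 1/√s. -/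
/-!
With `T' = T⁻¹`, conjugating the symmetric part gives `T' S T'* = [T']_s = -R²`, so
`S = -T R² T*`, whose inverse is `-T'* R'² T' = -T₃* T₃` (using `R'* = R'`).
Coercivity of `-S` gives `‖(-S)⁻¹‖ ≤ 1/s`, and the C*-identity `‖T₃‖² = ‖T₃* T₃‖` turns this
into `‖T₃‖ ≤ 1/√s`.
-/

open ContinuousLinearMap

section StarRing

variable {A : Type*} [Ring A] [StarRing A]

theorem mul_add_star_mul_star_of_mul_eq_one {a b : A} (hba : b * a = 1) :
    b * (a + star a) * star b = b + star b := by
  have hstar : star a * star b = 1 := by rw [← star_mul, hba, star_one]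
  rw [mul_add, add_mul, hba, one_mul, mul_assoc, hstar, mul_one, add_comm]

theorem IsSelfAdjoint.of_mul_eq_one {r r' : A} (hr : IsSelfAdjoint r) (h₁ : r * r' = 1) :
    IsSelfAdjoint r' := by
  have hstar : star r' * r = 1 := by rw [← hr.star_eq, ← star_mul, h₁, star_one]
  calc star r' = star r' * (r * r') := by rw [h₁, mul_one]
    _ = r' := by rw [← mul_assoc, hstar, one_mul]

theorem star_mul_self_mul_eq_neg_one {a b r r' s : A} (hab : a * b = 1) (hba : b * a = 1)
    (hr : IsSelfAdjoint r) (hr₁ : r * r' = 1) (hr₂ : r' * r = 1)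
    (hs : b * s * star b = -(r * r)) :
    star (r' * b) * (r' * b) * s = -1 ∧ s * (star (r' * b) * (r' * b)) = -1 := by
  have cancel : ∀ {x y : A}, x * y = 1 → ∀ z, x * (y * z) = z := fun h z => by
    rw [← mul_assoc, h, one_mul]
  have hstar₁ : star b * star a = 1 := by rw [← star_mul, hab, star_one]
  have hstar₂ : star a * star b = 1 := by rw [← star_mul, hba, star_one]
  have hs' : s = -(a * (r * r) * star a) :=
    calc s = a * (b * s * star b) * star a := by
          rw [mul_assoc, mul_assoc, hstar₁, mul_one, cancel hab]
      _ = -(a * (r * r) * star a) := by rw [hs, mul_neg, neg_mul]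
  rw [hs', star_mul, (hr.of_mul_eq_one hr₁).star_eq]
  constructor
  · simp only [mul_neg, mul_assoc, cancel hba, cancel hr₂, hstar₁]
  · simp only [neg_mul, mul_assoc, cancel hstar₂, cancel hr₁, hab]

end StarRing

section Coercive

variable {E : Type*} [NormedAddCommGroup E] [InnerProductSpace ℝ E]

theorem mul_norm_le_norm_of_coercive {B : E → E} {s : ℝ}
    (hB : ∀ y, s * ‖y‖ ^ 2 ≤ inner ℝ (B y) y) (y : E) : s * ‖y‖ ≤ ‖B y‖ := by
  rcases (norm_nonneg y).eq_or_lt with hy | hy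
  · rw [← hy, mul_zero]
    exact norm_nonneg _
  · refine le_of_mul_le_mul_right ?_ hy
    calc s * ‖y‖ * ‖y‖ = s * ‖y‖ ^ 2 := by ring
      _ ≤ inner ℝ (B y) y := hB y
      _ ≤ ‖B y‖ * ‖y‖ := real_inner_le_norm _ _

theorem opNorm_le_inv_of_coercive_of_comp_eq_one {B M : E →L[ℝ] E} {s : ℝ} (hs : 0 < s)
    (hB : ∀ y, s * ‖y‖ ^ 2 ≤ inner ℝ (B y) y) (hBM : B ∘L M = 1) : ‖M‖ ≤ s⁻¹ := by
  refine opNorm_le_bound _ (inv_nonneg.mpr hs.le) fun x => ?_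
  rw [inv_mul_eq_div, le_div_iff₀' hs]
  have h := mul_norm_le_norm_of_coercive hB (M x)
  rwa [← comp_apply, hBM, one_apply_eq_self] at h

end Coercive

theorem norm_le_sqrt_of_norm_adjoint_comp_self_le {𝕜 E F : Type*} [RCLike 𝕜]
    [NormedAddCommGroup E] [InnerProductSpace 𝕜 E] [CompleteSpace E]
    [NormedAddCommGroup F] [InnerProductSpace 𝕜 F] [CompleteSpace F]
    {A : E →L[𝕜] F} {c : ℝ} (h : ‖adjoint A ∘L A‖ ≤ c) : ‖A‖ ≤ √c := by
  rw [Real.le_sqrt (norm_nonneg _) ((norm_nonneg _).trans h), sq, ← norm_adjoint_comp_self]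
  exact h

theorem T3_adjoint_comp_eq_neg_inv_symmetric_part_general
    {H : Type*} [NormedAddCommGroup H] [InnerProductSpace ℝ H] [CompleteSpace H]
    (T T' : H →L[ℝ] H) (hT₁ : T ∘L T' = 1) (hT₂ : T' ∘L T = 1)
    (s : ℝ) (hs : 0 < s)
    (hcoerc : ∀ x : H,
      s * ‖x‖ ^ 2 ≤ inner ℝ ((-(((1 : ℝ) / 2) • (T + ContinuousLinearMap.adjoint T))) x) x)
    -- R is the positive self-adjoint square root of -[T⁻¹]_s, with inverse R'
    (R R' : H →L[ℝ] H)
    (hRsa : ContinuousLinearMap.adjoint R = R)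
    (hRsq : R ∘L R = -(((1 : ℝ) / 2) • (T' + ContinuousLinearMap.adjoint T')))
    (hR₁ : R ∘L R' = 1) (hR₂ : R' ∘L R = 1) :
    (ContinuousLinearMap.adjoint (R' ∘L T') ∘L (R' ∘L T')) ∘L
        (((1 : ℝ) / 2) • (T + ContinuousLinearMap.adjoint T)) = -1 ∧
    (((1 : ℝ) / 2) • (T + ContinuousLinearMap.adjoint T)) ∘L
        (ContinuousLinearMap.adjoint (R' ∘L T') ∘L (R' ∘L T')) = -1 ∧
    ‖R' ∘L T'‖ ≤ 1 / Real.sqrt s := by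
  have hconj : T' * ((1 / 2 : ℝ) • (T + star T)) * star T' = -(R * R) := by
    rw [show R * R = _ from hRsq, neg_neg, mul_smul_comm, smul_mul_assoc,
      mul_add_star_mul_star_of_mul_eq_one hT₂, star_eq_adjoint]
  obtain ⟨hMS, hSM⟩ := star_mul_self_mul_eq_neg_one hT₁ hT₂ hRsa hR₁ hR₂ hconj
  have hM : ‖adjoint (R' ∘L T') ∘L (R' ∘L T')‖ ≤ s⁻¹ :=
    opNorm_le_inv_of_coercive_of_comp_eq_one hs hcoerc <| by
      rw [neg_comp, neg_eq_iff_eq_neg]; exact hSM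
  refine ⟨hMS, hSM, ?_⟩
  rw [one_div, ← Real.sqrt_inv]
  exact norm_le_sqrt_of_norm_adjoint_comp_self_le hM

theorem T3_adjoint_comp_eq_neg_inv_symmetric_part
    {H : Type*} [NormedAddCommGroup H] [InnerProductSpace ℝ H] [CompleteSpace H]
    (T T' : H →L[ℝ] H) (hT₁ : T ∘L T' = 1) (hT₂ : T' ∘L T = 1)
    (s : ℝ) (hs : 0 < s)
    (hcoerc : ∀ x : H,
      s * ‖x‖ ^ 2 ≤ inner ℝ ((-(((1 : ℝ) / 2) • (T + ContinuousLinearMap.adjoint T))) x) x)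
    -- R is the positive self-adjoint square root of -[T⁻¹]_s, with inverse R'
    (R R' : H →L[ℝ] H)
    (hRsa : ContinuousLinearMap.adjoint R = R)
    (hRpos : ∀ x : H, (0 : ℝ) ≤ inner ℝ (R x) x)
    (hRsq : R ∘L R = -(((1 : ℝ) / 2) • (T' + ContinuousLinearMap.adjoint T')))
    (hR₁ : R ∘L R' = 1) (hR₂ : R' ∘L R = 1) :
    (ContinuousLinearMap.adjoint (R' ∘L T') ∘L (R' ∘L T')) ∘L
        (((1 : ℝ) / 2) • (T + ContinuousLinearMap.adjoint T)) = -1 ∧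
    (((1 : ℝ) / 2) • (T + ContinuousLinearMap.adjoint T)) ∘L
        (ContinuousLinearMap.adjoint (R' ∘L T') ∘L (R' ∘L T')) = -1 ∧
    ‖R' ∘L T'‖ ≤ 1 / Real.sqrt s :=
  T3_adjoint_comp_eq_neg_inv_symmetric_part_general T T' hT₁ hT₂ s hs hcoerc R R' hRsa hRsq hR₁ hR₂
end

section
/- (Entropy–Laplace duality inequality) For a probability measure ν, f ∈ L²(ν), and g bounded measurable, ∫ f² g dν ≤ Ent_ν(f²) + ‖f‖²_{L²(ν)} log (∫ e^g dν), where Ent_ν(f²) = ∫ f² log f² dν − ‖f‖²_{L²(ν)} log ‖f‖²_{L²(ν)}. -/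
/-!
Young's inequality `u v ≤ u log u - u + e^v` for the pair of convex conjugates `u log u - u` and
`e^v`, applied pointwise with `u = f²` and `v = g + c`, integrates to
`∫ f² g + c ‖f‖² ≤ ∫ f² log f² - ‖f‖² + e^c ∫ e^g` for every real `c`. The optimal shift
`e^c = ‖f‖² / ∫ e^g` turns this into the claim.
-/

open MeasureTheory Real

lemma Real.mul_le_mul_log_sub_add_exp {u : ℝ} (hu : 0 ≤ u) (v : ℝ) :
    u * v ≤ u * log u - u + exp v := by
  rcases hu.eq_or_lt with rfl | hu_pos
  · simpa using (exp_pos v).le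
  have key : u * (v - log u + 1) ≤ u * exp (v - log u) :=
    mul_le_mul_of_nonneg_left (add_one_le_exp _) hu
  rw [exp_sub, exp_log hu_pos, mul_div_cancel₀ _ hu_pos.ne'] at key
  linarith

section GibbsVariational

variable {α : Type*} [MeasurableSpace α] {μ : Measure α} {u g : α → ℝ}

lemma integral_mul_add_const_mul_le (hu : 0 ≤ u) (hu_int : Integrable u μ)
    (hulog : Integrable (fun x => u x * log (u x)) μ) (hug : Integrable (fun x => u x * g x) μ)
    (hexp : Integrable (fun x => exp (g x)) μ) (c : ℝ) :
    (∫ x, u x * g x ∂μ) + c * ∫ x, u x ∂μ ≤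
      (∫ x, u x * log (u x) ∂μ) - (∫ x, u x ∂μ) + exp c * ∫ x, exp (g x) ∂μ := by
  have hug_c : Integrable (fun x => u x * g x + u x * c) μ := hug.add (hu_int.mul_const c)
  have hulog_sub : Integrable (fun x => u x * log (u x) - u x) μ := hulog.sub hu_int
  have hexp_c : Integrable (fun x => exp (g x + c)) μ := by
    simpa only [exp_add] using hexp.mul_const (exp c)
  calc (∫ x, u x * g x ∂μ) + c * ∫ x, u x ∂μ = ∫ x, (u x * g x + u x * c) ∂μ := by
        rw [integral_add hug (hu_int.mul_const c), integral_mul_const, mul_comm]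
    _ ≤ ∫ x, (u x * log (u x) - u x + exp (g x + c)) ∂μ :=
        integral_mono hug_c (hulog_sub.add hexp_c)
          fun x => by simpa only [mul_add] using Real.mul_le_mul_log_sub_add_exp (hu x) (g x + c)
    _ = (∫ x, u x * log (u x) ∂μ) - (∫ x, u x ∂μ) + exp c * ∫ x, exp (g x) ∂μ := by
        rw [integral_add hulog_sub hexp_c, integral_sub hulog hu_int, ← integral_const_mul]
        simp only [exp_add, mul_comm (exp c)]

theorem integral_mul_le_entropy_add_mul_log_integral_exp (hu : 0 ≤ u) (hu_int : Integrable u μ)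
    (hulog : Integrable (fun x => u x * log (u x)) μ) (hug : Integrable (fun x => u x * g x) μ)
    (hexp : Integrable (fun x => exp (g x)) μ) :
    (∫ x, u x * g x ∂μ) ≤
      ((∫ x, u x * log (u x) ∂μ) - (∫ x, u x ∂μ) * log (∫ x, u x ∂μ)) +
        (∫ x, u x ∂μ) * log (∫ x, exp (g x) ∂μ) := by
  set A := ∫ x, u x ∂μ
  set E := ∫ x, exp (g x) ∂μ
  rcases (integral_nonneg hu : 0 ≤ A).eq_or_lt with hA | hA
  · have hu_zero : u =ᵐ[μ] 0 := (integral_eq_zero_iff_of_nonneg hu hu_int).mp hA.symm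
    have hug_zero : ∫ x, u x * g x ∂μ = 0 :=
      integral_eq_zero_of_ae (by filter_upwards [hu_zero] with x hx; simp [hx])
    have hulog_zero : ∫ x, u x * log (u x) ∂μ = 0 :=
      integral_eq_zero_of_ae (by filter_upwards [hu_zero] with x hx; simp [hx])
    simp [hug_zero, hulog_zero, show A = 0 from hA.symm]
  have : NeZero μ := ⟨by rintro rfl; simp at hA⟩
  have hE : 0 < E := integral_exp_pos hexp
  have h := integral_mul_add_const_mul_le hu hu_int hulog hug hexp (log A - log E)
  rw [exp_sub, exp_log hA, exp_log hE, div_mul_cancel₀ _ hE.ne'] at h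
  linarith

end GibbsVariational

theorem entropy_laplace_duality_inequality
    {α : Type*} [MeasurableSpace α] (ν : Measure α) [IsProbabilityMeasure ν]
    (f g : α → ℝ) (hf : MemLp f 2 ν)
    (hflog : Integrable (fun x => f x ^ 2 * Real.log (f x ^ 2)) ν)
    (hg : Measurable g) (C : ℝ) (hgC : ∀ x, |g x| ≤ C) :
    (∫ x, f x ^ 2 * g x ∂ν) ≤
      ((∫ x, f x ^ 2 * Real.log (f x ^ 2) ∂ν) -
          (∫ x, f x ^ 2 ∂ν) * Real.log (∫ x, f x ^ 2 ∂ν)) +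
        (∫ x, f x ^ 2 ∂ν) * Real.log (∫ x, Real.exp (g x) ∂ν) := by
  have hf_sq : Integrable (fun x => f x ^ 2) ν := hf.integrable_sq
  have hexp_bdd : ∀ x, ‖exp (g x)‖ ≤ exp C := fun x => by
    rw [norm_of_nonneg (exp_pos _).le]
    exact exp_le_exp.mpr (abs_le.mp (hgC x)).2
  exact integral_mul_le_entropy_add_mul_log_integral_exp (u := fun x => f x ^ 2)
    (fun x => sq_nonneg (f x)) hf_sq hflog
    (hf_sq.mul_bdd hg.aestronglyMeasurable (.of_forall hgC))
    (.of_bound hg.exp.aestronglyMeasurable _ (.of_forall hexp_bdd))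
end

section
/- Let L = S + A on a Hilbert space H decomposed as H = H₀ ⊕ H₊, where S is self-adjoint nonpositive with S Π₀ = Π₀ S = 0 and −S ≥ s Π₊ for some s > 0, Π₀ A Π₀ = 0, and A_{+0} = Π₊ A Π₀ satisfies ‖A_{+0}φ‖ ≥ a‖φ‖ on H₀ with a > 0. Assume all blocks are bounded and the Schur complement S₀ = A_{+0}* L_{++}⁻¹ A_{+0} is invertible on H₀ with ‖S₀⁻¹‖ ≤ M. Then L is invertible on H with ‖L⁻¹‖ ≤ 2M + 3/s. -/
/-!
With `Q = 1 - P₀`, the Schur block formula holds in any ring: if `Lp` inverts `Q L Q` in the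
corner `Q R Q` and `T` inverts the Schur complement `P₀ L P₀ - P₀ L Lp L P₀` in the corner
`P₀ R P₀`, then `T - T L Lp - Lp L T + (Lp + Lp L T L Lp)` is a two-sided inverse of `L`; the
right-inverse identity is the left-inverse one read in the opposite ring. Here `P₀ L P₀ = 0` and
`S` drops out of every block that meets `P₀`.

The norm bound is an energy estimate. Since `A` is skew, `⟪L x, x⟫ = ⟪S x, x⟫ ≤ -s ‖Q x‖²`,
which for `x = Lp y` gives `s ‖Lp y‖² ≤ -⟪y, Lp y⟫`. Testing with `y = A T φ` and using
`P₀ A Lp A T = -P₀` gives `s ‖Lp A T φ‖² ≤ -⟪T φ, φ⟫ ≤ ‖T‖ ‖φ‖²`; the block `T A Lp` is the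
adjoint of such a block for `(L†, Lp†, T†)`, which satisfy the same hypotheses. For the `++` block
test with `y = φ + A T A Lp φ`, whose second summand is orthogonal to `Lp y` because
`P₀ A (Lp + Lp A T A Lp) = 0`. Finally `2 √(‖T‖ / s) ≤ ‖T‖ + 1 / s`.
-/

section Ring

variable {R : Type*} [Ring R]

def IsCornerInverse (e a b : R) : Prop :=
  b = e * b * e ∧ a * b = e ∧ b * a = e

def schurComplement (P L Lp : R) : R :=
  P * L * P - P * L * Lp * L * P

-- The block matrix `[[T, -T L Lp], [-Lp L T, Lp + Lp L T L Lp]]`, written as a single element.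
def schurInverse (L Lp T : R) : R :=
  T - T * L * Lp - Lp * L * T + (Lp + Lp * L * T * L * Lp)

namespace IsCornerInverse

variable {e a b : R}

theorem mul_left_eq (he : IsIdempotentElem e) (h : IsCornerInverse e a b) : e * b = b := by
  rw [h.1, ← mul_assoc, ← mul_assoc, he.eq]

theorem op (h : IsCornerInverse e a b) :
    IsCornerInverse (MulOpposite.op e) (MulOpposite.op a) (MulOpposite.op b) := by
  obtain ⟨hb, hab, hba⟩ := h
  refine ⟨?_, ?_, ?_⟩
  · conv_lhs => rw [hb]
    simp only [MulOpposite.op_mul, mul_assoc]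
  · rw [← MulOpposite.op_mul, hba]
  · rw [← MulOpposite.op_mul, hab]

theorem star [StarRing R] (h : IsCornerInverse e a b) :
    IsCornerInverse (star e) (star a) (star b) := by
  obtain ⟨hb, hab, hba⟩ := h
  refine ⟨?_, ?_, ?_⟩
  · conv_lhs => rw [hb]
    simp only [star_mul, mul_assoc]
  · rw [← star_mul, hba]
  · rw [← star_mul, hab]

theorem mul_eq_neg {c : R} (he : IsIdempotentElem e) (h : IsCornerInverse e (-(e * c * e)) b) :
    e * c * b = -e :=
  calc e * c * b = -(-(e * c * e) * b) := by
        conv_lhs => rw [← h.mul_left_eq he]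
        noncomm_ring
    _ = -e := by rw [h.2.1]

end IsCornerInverse

variable {P L Lp T : R}

theorem mul_schurInverse (hP : IsIdempotentElem P)
    (hLp : IsCornerInverse (1 - P) ((1 - P) * L * (1 - P)) Lp)
    (hT : IsCornerInverse P (schurComplement P L Lp) T) :
    L * schurInverse L Lp T = 1 := by
  have hQLLp : (1 - P) * L * Lp = 1 - P := by
    rw [← hLp.mul_left_eq hP.one_sub, ← mul_assoc, hLp.2.1]
  have hPLT : P * L * T - P * L * Lp * L * T = P := by
    calc P * L * T - P * L * Lp * L * T = P * L * (P * T) - P * L * Lp * L * (P * T) := by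
          rw [hT.mul_left_eq hP]
      _ = schurComplement P L Lp * T := by unfold schurComplement; noncomm_ring
      _ = P := hT.2.1
  calc L * schurInverse L Lp T
      = (P * L * T - P * L * Lp * L * T) - (P * L * T - P * L * Lp * L * T) * L * Lp
        + P * L * Lp + ((1 - P) * L * T - (1 - P) * L * T * L * Lp - (1 - P) * L * Lp * L * T
        + (1 - P) * L * Lp + (1 - P) * L * Lp * L * T * L * Lp) := by
        unfold schurInverse; noncomm_ring
    _ = 1 := by rw [hPLT, hQLLp]; noncomm_ring

theorem schurInverse_mul (hP : IsIdempotentElem P)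
    (hLp : IsCornerInverse (1 - P) ((1 - P) * L * (1 - P)) Lp)
    (hT : IsCornerInverse P (schurComplement P L Lp) T) :
    schurInverse L Lp T * L = 1 := by
  open MulOpposite in
  have := mul_schurInverse (P := op P) (L := op L) (Lp := op Lp) (T := op T)
    (by rw [IsIdempotentElem, ← op_mul, hP.eq]) (by simpa [mul_assoc] using hLp.op)
    (by simpa [schurComplement, mul_assoc] using hT.op)
  apply op_injective
  rw [op_mul, op_one, ← this]
  simp only [schurInverse, op_add, op_sub, op_mul]
  noncomm_ring

variable {S A : R}

theorem schurComplement_add (hSP : S * P = 0) (hPS : P * S = 0) (hPAP : P * A * P = 0) :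
    schurComplement P (S + A) Lp = -(P * A * Lp * A * P) := by
  have hSP' : ∀ x, x * S * P = 0 := fun x => by rw [mul_assoc, hSP, mul_zero]
  simp only [schurComplement, mul_add, add_mul, hPS, hSP', hPAP, zero_add]
  noncomm_ring

theorem schurInverse_add (hSP : S * P = 0) (hPS : P * S = 0) (hT : T = P * T * P) :
    schurInverse (S + A) Lp T = schurInverse A Lp T := by
  have hST : ∀ x, x * S * T = 0 := fun x => by
    rw [hT, mul_assoc, ← mul_assoc S, ← mul_assoc S, hSP, zero_mul, zero_mul, mul_zero]
  have hTS : ∀ x, x * T * S = 0 := fun x => by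
    rw [hT, mul_assoc, mul_assoc, hPS, mul_zero, mul_zero]
  have hTS₀ : T * S = 0 := by simpa using hTS 1
  simp only [schurInverse, mul_add, add_mul, hST, hTS, hTS₀, zero_add]

end Ring

open ContinuousLinearMap
open scoped InnerProductSpace

section Hilbert

variable {H : Type*} [NormedAddCommGroup H] [InnerProductSpace ℝ H] [CompleteSpace H]

theorem inner_apply_left_of_star_eq_neg {A : H →L[ℝ] H} (hA : star A = -A) (u v : H) :
    ⟪A u, v⟫_ℝ = -⟪u, A v⟫_ℝ := by
  rw [← adjoint_inner_right, ← star_eq_adjoint, hA, neg_apply, inner_neg_right]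

theorem inner_apply_self_of_star_eq_neg {A : H →L[ℝ] H} (hA : star A = -A) (x : H) :
    ⟪A x, x⟫_ℝ = 0 := by
  have h := inner_apply_left_of_star_eq_neg hA x x
  rw [real_inner_comm (A x) x] at h
  linarith

theorem inner_star_apply_self (L : H →L[ℝ] H) (x : H) : ⟪star L x, x⟫_ℝ = ⟪L x, x⟫_ℝ := by
  rw [star_eq_adjoint, adjoint_inner_left, real_inner_comm]

theorem sq_norm_le_neg_inner_of_isCornerInverse {Q L B : H →L[ℝ] H} {s : ℝ}
    (hQ : IsStarProjection Q) (hL : ∀ x, s * ‖Q x‖ ^ 2 ≤ -⟪L x, x⟫_ℝ)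
    (hB : IsCornerInverse Q (Q * L * Q) B) (y : H) :
    s * ‖B y‖ ^ 2 ≤ -⟪y, B y⟫_ℝ := by
  have hQB : Q (B y) = B y := congr($(hB.mul_left_eq hQ.isIdempotentElem) y)
  have hQsymm : ∀ u v, ⟪Q u, v⟫_ℝ = ⟪u, Q v⟫_ℝ := hQ.isSelfAdjoint.isSymmetric
  have hLB : ⟪L (B y), B y⟫_ℝ = ⟪y, B y⟫_ℝ :=
    calc ⟪L (B y), B y⟫_ℝ = ⟪L (Q (B y)), Q (B y)⟫_ℝ := by rw [hQB]
      _ = ⟪(Q * L * Q * B) y, B y⟫_ℝ := (hQsymm _ _).symm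
      _ = ⟪y, B y⟫_ℝ := by rw [hB.2.1, hQsymm, hQB]
  simpa [hQB, hLB] using hL (B y)

section SchurBlocks

variable {P A B T : H →L[ℝ] H} {s : ℝ}

theorem norm_mul_mul_le_sqrt (hs : 0 < s) (hP : IsStarProjection P) (hA : star A = -A)
    (hB : ∀ y, s * ‖B y‖ ^ 2 ≤ -⟪y, B y⟫_ℝ) (hT : IsCornerInverse P (-(P * A * B * A * P)) T) :
    ‖B * A * T‖ ≤ √(‖T‖ / s) := by
  have hPsymm : ∀ u v, ⟪P u, v⟫_ℝ = ⟪u, P v⟫_ℝ := hP.isSelfAdjoint.isSymmetric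
  have hPT : ∀ x, P (T x) = T x := fun x => congr($(hT.mul_left_eq hP.isIdempotentElem) x)
  have hN : P * A * B * A * T = -P := by
    simpa only [mul_assoc] using hT.mul_eq_neg (c := A * B * A) hP.isIdempotentElem
  refine opNorm_le_bound _ (Real.sqrt_nonneg _) fun φ => ?_
  have henergy : -⟪A (T φ), B (A (T φ))⟫_ℝ = -⟪T φ, φ⟫_ℝ :=
    calc -⟪A (T φ), B (A (T φ))⟫_ℝ = ⟪P (T φ), A (B (A (T φ)))⟫_ℝ := by
          rw [inner_apply_left_of_star_eq_neg hA, neg_neg, hPT]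
      _ = ⟪T φ, (P * A * B * A * T) φ⟫_ℝ := by rw [hPsymm]; rfl
      _ = -⟪T φ, φ⟫_ℝ := by
          rw [hN, neg_apply, inner_neg_right, ← hPsymm, hPT]
  have hsq : s * ‖(B * A * T) φ‖ ^ 2 ≤ ‖T‖ * ‖φ‖ ^ 2 :=
    calc s * ‖(B * A * T) φ‖ ^ 2 ≤ -⟪A (T φ), B (A (T φ))⟫_ℝ := hB _
      _ = -⟪T φ, φ⟫_ℝ := henergy
      _ ≤ ‖T φ‖ * ‖φ‖ := (neg_le_abs _).trans (abs_real_inner_le_norm _ _)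
      _ ≤ ‖T‖ * ‖φ‖ * ‖φ‖ := by gcongr; exact le_opNorm _ _
      _ = ‖T‖ * ‖φ‖ ^ 2 := by ring
  rw [← Real.sqrt_sq (norm_nonneg φ), ← Real.sqrt_mul (by positivity),
    Real.le_sqrt (norm_nonneg _) (by positivity), div_mul_eq_mul_div, le_div_iff₀ hs]
  linarith

theorem norm_add_mul_le_inv (hs : 0 < s) (hP : IsStarProjection P) (hA : star A = -A)
    (hB : ∀ y, s * ‖B y‖ ^ 2 ≤ -⟪y, B y⟫_ℝ) (hT : IsCornerInverse P (-(P * A * B * A * P)) T) :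
    ‖B + B * A * T * A * B‖ ≤ s⁻¹ := by
  have hPsymm : ∀ u v, ⟪P u, v⟫_ℝ = ⟪u, P v⟫_ℝ := hP.isSelfAdjoint.isSymmetric
  have hPT : ∀ x, P (T x) = T x := fun x => congr($(hT.mul_left_eq hP.isIdempotentElem) x)
  have hN : P * A * B * A * T = -P := by
    simpa only [mul_assoc] using hT.mul_eq_neg (c := A * B * A) hP.isIdempotentElem
  have hPAR : P * A * (B + B * A * T * A * B) = 0 :=
    calc P * A * (B + B * A * T * A * B) = P * A * B + P * A * B * A * T * A * B := by
          noncomm_ring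
      _ = 0 := by rw [hN]; noncomm_ring
  refine opNorm_le_bound _ (by positivity) fun φ => ?_
  set R := B + B * A * T * A * B
  set ψ := T (A (B φ))
  have hRφ : R φ = B (φ + A ψ) := by simp [R, ψ, map_add]
  have horth : ⟪A ψ, R φ⟫_ℝ = 0 :=
    calc ⟪A ψ, R φ⟫_ℝ = -⟪P ψ, A (R φ)⟫_ℝ := by
          rw [inner_apply_left_of_star_eq_neg hA, hPT]
      _ = -⟪ψ, (P * A * R) φ⟫_ℝ := by rw [hPsymm]; rfl
      _ = 0 := by rw [hPAR, zero_apply, inner_zero_right, neg_zero]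
  have hsq : s * ‖R φ‖ ^ 2 ≤ ‖φ‖ * ‖R φ‖ :=
    calc s * ‖R φ‖ ^ 2 ≤ -⟪φ + A ψ, R φ⟫_ℝ := hRφ ▸ hB _
      _ = -⟪φ, R φ⟫_ℝ := by rw [inner_add_left, horth, add_zero]
      _ ≤ ‖φ‖ * ‖R φ‖ := (neg_le_abs _).trans (abs_real_inner_le_norm _ _)
  rcases (norm_nonneg (R φ)).eq_or_lt with h0 | hpos
  · rw [← h0]; positivity
  · rw [inv_mul_eq_div, le_div_iff₀ hs]
    nlinarith

end SchurBlocks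

theorem norm_schurInverse_le {L A Lp T P : H →L[ℝ] H} {s : ℝ} (hs : 0 < s)
    (hP : IsStarProjection P) (hA : star A = -A)
    (hL : ∀ x, s * ‖(1 - P) x‖ ^ 2 ≤ -⟪L x, x⟫_ℝ)
    (hLp : IsCornerInverse (1 - P) ((1 - P) * L * (1 - P)) Lp)
    (hT : IsCornerInverse P (-(P * A * Lp * A * P)) T) :
    ‖schurInverse A Lp T‖ ≤ 2 * ‖T‖ + 2 / s := by
  have hQ := hP.one_sub
  have hLpT := norm_mul_mul_le_sqrt hs hP hA
    (sq_norm_le_neg_inner_of_isCornerInverse hQ hL hLp) hT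
  have hTLp : ‖T * A * Lp‖ ≤ √(‖T‖ / s) := by
    have h := norm_mul_mul_le_sqrt hs hP hA
      (sq_norm_le_neg_inner_of_isCornerInverse hQ (L := star L)
        (by simpa only [inner_star_apply_self] using hL)
        (by simpa only [star_mul, hQ.isSelfAdjoint.star_eq, mul_assoc] using hLp.star))
      (by simpa only [star_neg, star_mul, hA, hP.isSelfAdjoint.star_eq, neg_mul, mul_neg, neg_neg,
        mul_assoc] using hT.star)
    rw [← norm_star]
    simpa [star_mul, hA, mul_assoc] using h
  have hR := norm_add_mul_le_inv hs hP hA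
    (sq_norm_le_neg_inner_of_isCornerInverse hQ hL hLp) hT
  have two_sqrt_le : 2 * √(‖T‖ / s) ≤ ‖T‖ + s⁻¹ := by
    set r := √(‖T‖ / s)
    have hT : ‖T‖ = s * r ^ 2 := by
      rw [Real.sq_sqrt (div_nonneg (norm_nonneg T) hs.le)]; field_simp
    have hinv := mul_inv_cancel₀ hs.ne'
    nlinarith [sq_nonneg (s * r - 1)]
  calc ‖schurInverse A Lp T‖
      ≤ ‖T‖ + ‖T * A * Lp‖ + ‖Lp * A * T‖ + ‖Lp + Lp * A * T * A * Lp‖ := by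
        unfold schurInverse
        refine (norm_add_le _ _).trans (add_le_add_left ((norm_sub_le _ _).trans ?_) _)
        exact add_le_add_left (norm_sub_le _ _) _
    _ ≤ 2 * ‖T‖ + 2 / s := by rw [div_eq_mul_inv]; linarith

end Hilbert

theorem hypocoercive_schur_resolvent_bound_general
    {H : Type*} [NormedAddCommGroup H] [InnerProductSpace ℝ H] [CompleteSpace H]
    (S A P₀ : H →L[ℝ] H)
    -- P₀ is an orthogonal projection, Π₊ = 1 - P₀
    (hproj : P₀ ∘L P₀ = P₀) (hprojsa : ContinuousLinearMap.adjoint P₀ = P₀)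
    -- S self-adjoint nonpositive with S P₀ = P₀ S = 0
    (hSP : S ∘L P₀ = 0) (hPS : P₀ ∘L S = 0)
    -- coercivity of -S on the range of Π₊ : -S ≥ s Π₊
    (s : ℝ) (hs : 0 < s)
    (hcoerc : ∀ x : H, s * ‖(1 - P₀) x‖ ^ 2 ≤ (inner ℝ (-(S x)) x : ℝ))
    -- A antisymmetric with P₀ A P₀ = 0
    (hAanti : ContinuousLinearMap.adjoint A = -A)
    (hPAP : P₀ ∘L A ∘L P₀ = 0)
    -- invertibility of L_{++} = Π₊ L Π₊ on the range of Π₊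
    (Lp : H →L[ℝ] H)
    (hLp₁ : ((1 - P₀) ∘L (S + A) ∘L (1 - P₀)) ∘L Lp = 1 - P₀)
    (hLp₂ : Lp ∘L ((1 - P₀) ∘L (S + A) ∘L (1 - P₀)) = 1 - P₀)
    (hLp₃ : Lp = (1 - P₀) ∘L Lp ∘L (1 - P₀))
    -- invertibility of the Schur complement S₀ = A_{+0}* L_{++}⁻¹ A_{+0} on the range of P₀
    (S₀' : H →L[ℝ] H) (M : ℝ)
    (hS₀'₁ : (-(P₀ ∘L A ∘L (Lp ∘L (A ∘L P₀)))) ∘L S₀' = P₀)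
    (hS₀'₂ : S₀' ∘L (-(P₀ ∘L A ∘L (Lp ∘L (A ∘L P₀)))) = P₀)
    (hS₀'₃ : S₀' = P₀ ∘L S₀' ∘L P₀)
    (hM : ‖S₀'‖ ≤ M) :
    ∃ L' : H →L[ℝ] H, (S + A) ∘L L' = 1 ∧ L' ∘L (S + A) = 1 ∧
      ‖L'‖ ≤ 2 * M + 3 / s := by
  simp only [← mul_def, mul_assoc] at hSP hPS hPAP hLp₁ hLp₂ hLp₃ hS₀'₁ hS₀'₂ hS₀'₃
  have hP : IsStarProjection P₀ := ⟨hproj, hprojsa⟩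
  have hL : ∀ x, s * ‖(1 - P₀) x‖ ^ 2 ≤ -⟪(S + A) x, x⟫_ℝ := fun x => by
    simpa [inner_add_left, inner_apply_self_of_star_eq_neg hAanti] using hcoerc x
  have hLp : IsCornerInverse (1 - P₀) ((1 - P₀) * (S + A) * (1 - P₀)) Lp := by
    refine ⟨?_, ?_, ?_⟩ <;> simp only [mul_assoc] <;> assumption
  have hT : IsCornerInverse P₀ (-(P₀ * A * Lp * A * P₀)) S₀' := by
    refine ⟨?_, ?_, ?_⟩ <;> simp only [mul_assoc] <;> assumption
  have hSchur : IsCornerInverse P₀ (schurComplement P₀ (S + A) Lp) S₀' := by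
    rwa [schurComplement_add hSP hPS (by simpa only [mul_assoc] using hPAP)]
  refine ⟨schurInverse (S + A) Lp S₀', mul_schurInverse hP.isIdempotentElem hLp hSchur,
    schurInverse_mul hP.isIdempotentElem hLp hSchur, ?_⟩
  rw [schurInverse_add hSP hPS hT.1]
  have hbound := norm_schurInverse_le hs hP hAanti hL hLp hT
  rw [div_eq_mul_inv] at hbound ⊢
  linarith [inv_pos.2 hs]

theorem hypocoercive_schur_resolvent_bound
    {H : Type*} [NormedAddCommGroup H] [InnerProductSpace ℝ H] [CompleteSpace H]
    (S A P₀ : H →L[ℝ] H)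
    -- P₀ is an orthogonal projection, Π₊ = 1 - P₀
    (hproj : P₀ ∘L P₀ = P₀) (hprojsa : ContinuousLinearMap.adjoint P₀ = P₀)
    -- S self-adjoint nonpositive with S P₀ = P₀ S = 0
    (hSsa : ContinuousLinearMap.adjoint S = S)
    (hSnonpos : ∀ x : H, (inner ℝ (S x) x : ℝ) ≤ 0)
    (hSP : S ∘L P₀ = 0) (hPS : P₀ ∘L S = 0)
    -- coercivity of -S on the range of Π₊ : -S ≥ s Π₊
    (s : ℝ) (hs : 0 < s)
    (hcoerc : ∀ x : H, s * ‖(1 - P₀) x‖ ^ 2 ≤ (inner ℝ (-(S x)) x : ℝ))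
    -- A antisymmetric with P₀ A P₀ = 0
    (hAanti : ContinuousLinearMap.adjoint A = -A)
    (hPAP : P₀ ∘L A ∘L P₀ = 0)
    -- macroscopic coercivity of A_{+0}
    (a : ℝ) (ha : 0 < a)
    (hmacro : ∀ x : H, a * ‖P₀ x‖ ≤ ‖(1 - P₀) (A (P₀ x))‖)
    -- invertibility of L_{++} = Π₊ L Π₊ on the range of Π₊
    (Lp : H →L[ℝ] H)
    (hLp₁ : ((1 - P₀) ∘L (S + A) ∘L (1 - P₀)) ∘L Lp = 1 - P₀)
    (hLp₂ : Lp ∘L ((1 - P₀) ∘L (S + A) ∘L (1 - P₀)) = 1 - P₀)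
    (hLp₃ : Lp = (1 - P₀) ∘L Lp ∘L (1 - P₀))
    -- invertibility of the Schur complement S₀ = A_{+0}* L_{++}⁻¹ A_{+0} on the range of P₀
    (S₀' : H →L[ℝ] H) (M : ℝ)
    (hS₀'₁ : (-(P₀ ∘L A ∘L (Lp ∘L (A ∘L P₀)))) ∘L S₀' = P₀)
    (hS₀'₂ : S₀' ∘L (-(P₀ ∘L A ∘L (Lp ∘L (A ∘L P₀)))) = P₀)
    (hS₀'₃ : S₀' = P₀ ∘L S₀' ∘L P₀)
    (hM : ‖S₀'‖ ≤ M) :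
    ∃ L' : H →L[ℝ] H, (S + A) ∘L L' = 1 ∧ L' ∘L (S + A) = 1 ∧
      ‖L'‖ ≤ 2 * M + 3 / s :=
  hypocoercive_schur_resolvent_bound_general S A P₀ hproj hprojsa hSP hPS s hs hcoerc hAanti hPAP Lp
    hLp₁ hLp₂ hLp₃ S₀' M hS₀'₁ hS₀'₂ hS₀'₃ hM
end
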